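/- Let d ≥ 3 be an integer, m an integer with 1 ≤ m ≤ d/2, 0 < κ < 1/2, R > 1, and c = 1/1000. For every x = (x', x'', x_d) ∈ Λ (with Λ, Ω as in the context), |∫_Ω e^{i R(x'·ξ' + x''·ξ'' + x_d|ξ|²)} dξ| ≥ cos(1/100) · |Ω|, where dξ is Lebesgue measure on ℝ^{d-1} and |Ω| is the Lebesgue measure of Ω. In particular this integral has absolute value comparable to |Ω| for all x ∈ Λ. -/

import Mathlib

open MeasureTheory Metric Real
open scoped ENNReal

/-- The vector in `ℝ^n` with integer coordinates `ℓ`. -/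
noncomputable def intVec {n : ℕ} (ℓ : Fin n → ℤ) : EuclideanSpace ℝ (Fin n) :=
  (EuclideanSpace.equiv (Fin n) ℝ).symm fun i => (ℓ i : ℝ)

/-- The first `m` coordinates `x'` of a vector `x ∈ ℝ^n`. -/
noncomputable def headV {n : ℕ} (m : ℕ) (h : m ≤ n) (x : EuclideanSpace ℝ (Fin n)) :
    EuclideanSpace ℝ (Fin m) :=
  (EuclideanSpace.equiv (Fin m) ℝ).symm fun i => x (Fin.castLE h i)

/-- The middle coordinates `x'' = (x_{m+1}, …, x_{d-1})` of a vector `x ∈ ℝ^d`. -/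
noncomputable def midV (d m : ℕ) (x : EuclideanSpace ℝ (Fin d)) :
    EuclideanSpace ℝ (Fin (d - m - 1)) :=
  (EuclideanSpace.equiv (Fin (d - m - 1)) ℝ).symm fun i =>
    x ⟨m + i, by have := i.isLt; omega⟩

/-- The coordinates `ξ'' = (ξ_{m+1}, …, ξ_{d-1})` of a vector `ξ ∈ ℝ^{d-1}`. -/
noncomputable def tailP (d m : ℕ) (ξ : EuclideanSpace ℝ (Fin (d - 1))) :
    EuclideanSpace ℝ (Fin (d - m - 1)) :=
  (EuclideanSpace.equiv (Fin (d - m - 1)) ℝ).symm fun i =>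
    ξ ⟨m + i, by have := i.isLt; omega⟩

/-- The set `Ω = [B^m(0, cR^{-1/2}) × (2πR^{-κ}ℤ^{d-m-1} + B^{d-m-1}(0, cR^{-1}))]
∩ B^{d-1}(0,1)`, with `c = 1/1000`. -/
noncomputable def OmegaP (d m : ℕ) (h : m ≤ d - 1) (κ R : ℝ) :
    Set (EuclideanSpace ℝ (Fin (d - 1))) :=
  {ξ | ξ ∈ ball (0 : EuclideanSpace ℝ (Fin (d - 1))) 1 ∧
    ‖headV m h ξ‖ < (1 / 1000) * R ^ (-(1 : ℝ) / 2) ∧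
    ∃ n : Fin (d - m - 1) → ℤ,
      ‖tailP d m ξ - (2 * π * R ^ (-κ)) • intVec n‖ < (1 / 1000) * R ^ (-(1 : ℝ))}

/-- The set `Λ = [B^m(0, cR^{-1/2}) × (R^{κ-1}ℤ^{d-m-1} + B^{d-m-1}(0, cR^{-1}))
× ((1/2π)R^{2κ-1}ℤ + (-cR^{-1}, cR^{-1}))] ∩ B^d(0,1)`, with `c = 1/1000`. -/
noncomputable def LambdaP (d m : ℕ) (hm : m ≤ d) (hd : 0 < d) (κ R : ℝ) :
    Set (EuclideanSpace ℝ (Fin d)) :=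
  {x | x ∈ ball (0 : EuclideanSpace ℝ (Fin d)) 1 ∧
    ‖headV m hm x‖ < (1 / 1000) * R ^ (-(1 : ℝ) / 2) ∧
    (∃ ℓ : Fin (d - m - 1) → ℤ,
      ‖midV d m x - R ^ (κ - 1) • intVec ℓ‖ < (1 / 1000) * R ^ (-(1 : ℝ))) ∧
    ∃ k : ℤ,
      |x ⟨d - 1, by omega⟩ - (1 / (2 * π)) * R ^ (2 * κ - 1) * k| <
        (1 / 1000) * R ^ (-(1 : ℝ))}

/-- `c_α(μ) = sup_{x, r>0} μ(B(x,r)) / r^α`, valued in `ℝ≥0∞`. -/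
noncomputable def cAlpha {d : ℕ} (α : ℝ) (μ : Measure (EuclideanSpace ℝ (Fin d))) : ℝ≥0∞ :=
  ⨆ (x : EuclideanSpace ℝ (Fin d)) (r : ℝ) (_ : 0 < r),
    μ (ball x r) / ENNReal.ofReal (r ^ α)

lemma sum_sq_le_of_inj {n k : ℕ} (e : Fin k → Fin n) (he : Function.Injective e)
    (x : Fin n → ℝ) : ∑ i, x (e i) ^ 2 ≤ ∑ j, x j ^ 2 := by
  rw [← Finset.sum_image (f := fun j => x j ^ 2) (g := e) (fun a _ b _ h => he h)]
  exact Finset.sum_le_sum_of_subset_of_nonneg (Finset.subset_univ _) fun _ _ _ => sq_nonneg _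

lemma norm_headV_le {n : ℕ} (m : ℕ) (h : m ≤ n) (x : EuclideanSpace ℝ (Fin n)) :
    ‖headV m h x‖ ≤ ‖x‖ := by
  rw [EuclideanSpace.norm_eq, EuclideanSpace.norm_eq]
  exact Real.sqrt_le_sqrt
    (sum_sq_le_of_inj (Fin.castLE h) (Fin.castLE_injective h) fun j => ‖x j‖)

lemma norm_midV_le (d m : ℕ) (x : EuclideanSpace ℝ (Fin d)) : ‖midV d m x‖ ≤ ‖x‖ := by
  rw [EuclideanSpace.norm_eq, EuclideanSpace.norm_eq]
  refine Real.sqrt_le_sqrt (sum_sq_le_of_inj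
    (fun i => (⟨m + i, by have := i.isLt; omega⟩ : Fin d)) ?_ fun j => ‖x j‖)
  intro i j hij
  have := congrArg Fin.val hij
  simp only at this
  exact Fin.ext (by omega)

lemma norm_tailP_le (d m : ℕ) (ξ : EuclideanSpace ℝ (Fin (d - 1))) : ‖tailP d m ξ‖ ≤ ‖ξ‖ := by
  rw [EuclideanSpace.norm_eq, EuclideanSpace.norm_eq]
  refine Real.sqrt_le_sqrt (sum_sq_le_of_inj
    (fun i => (⟨m + i, by have := i.isLt; omega⟩ : Fin (d - 1))) ?_ fun j => ‖ξ j‖)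
  intro i j hij
  have := congrArg Fin.val hij
  simp only at this
  exact Fin.ext (by omega)

lemma abs_coord_le {n : ℕ} (x : EuclideanSpace ℝ (Fin n)) (i : Fin n) : |x i| ≤ ‖x‖ := by
  rw [EuclideanSpace.norm_eq]
  calc |x i| = ‖x i‖ := (Real.norm_eq_abs _).symm
    _ = Real.sqrt (‖x i‖ ^ 2) := by rw [Real.sqrt_sq (norm_nonneg _)]
    _ ≤ _ := Real.sqrt_le_sqrt
        (Finset.single_le_sum (fun j _ => sq_nonneg ‖x j‖) (Finset.mem_univ i))

lemma norm_sq_split (d m : ℕ) (h2 : m ≤ d - 1) (ξ : EuclideanSpace ℝ (Fin (d - 1))) :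
    ‖ξ‖ ^ 2 = ‖headV m h2 ξ‖ ^ 2 + ‖tailP d m ξ‖ ^ 2 := by
  have hsq : ∀ {k : ℕ} (y : EuclideanSpace ℝ (Fin k)), ‖y‖ ^ 2 = ∑ i, ‖y i‖ ^ 2 := by
    intro k y
    rw [EuclideanSpace.norm_eq, Real.sq_sqrt (Finset.sum_nonneg fun _ _ => sq_nonneg _)]
  rw [hsq ξ, hsq (headV m h2 ξ), hsq (tailP d m ξ)]
  set F : ℕ → ℝ := fun j => if h : j < d - 1 then ‖ξ ⟨j, h⟩‖ ^ 2 else 0 with hF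
  have h1 : ∑ i : Fin (d - 1), ‖ξ i‖ ^ 2 = ∑ j ∈ Finset.range (d - 1), F j := by
    rw [← Fin.sum_univ_eq_sum_range]
    exact Finset.sum_congr rfl fun i _ => by simp [hF, i.isLt]
  have key : ∑ j ∈ Finset.range (d - 1), F j
      = ∑ j ∈ Finset.range m, F j + ∑ j ∈ Finset.range (d - m - 1), F (m + j) := by
    rw [show d - 1 = m + (d - m - 1) by omega, Finset.sum_range_add]
  have h2' : ∑ j ∈ Finset.range m, F j = ∑ i : Fin m, ‖headV m h2 ξ i‖ ^ 2 := by
    rw [← Fin.sum_univ_eq_sum_range]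
    refine Finset.sum_congr rfl fun i _ => ?_
    have hi : (i : ℕ) < d - 1 := lt_of_lt_of_le i.isLt h2
    simp only [hF, dif_pos hi]
    rfl
  have h3' : ∑ j ∈ Finset.range (d - m - 1), F (m + j)
      = ∑ i : Fin (d - m - 1), ‖tailP d m ξ i‖ ^ 2 := by
    rw [← Fin.sum_univ_eq_sum_range (fun j => F (m + j))]
    refine Finset.sum_congr rfl fun i _ => ?_
    have hi : m + (i : ℕ) < d - 1 := by have := i.isLt; omega
    simp only [hF, dif_pos hi]
    rfl
  rw [h1, key, h2', h3']

lemma inner_intVec {p : ℕ} (a b : Fin p → ℤ) :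
    (inner ℝ (intVec a) (intVec b) : ℝ) = ((∑ i, a i * b i : ℤ) : ℝ) := by
  rw [PiLp.inner_apply]
  push_cast
  refine Finset.sum_congr rfl fun i _ => ?_
  simp [intVec, RCLike.inner_apply, mul_comm]

lemma norm_sq_intVec {p : ℕ} (a : Fin p → ℤ) :
    ‖intVec a‖ ^ 2 = ((∑ i, a i * a i : ℤ) : ℝ) := by
  rw [← real_inner_self_eq_norm_sq, inner_intVec]

lemma continuous_headV {n : ℕ} (m : ℕ) (h : m ≤ n) :
    Continuous fun x : EuclideanSpace ℝ (Fin n) => headV m h x :=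
  (EuclideanSpace.equiv (Fin m) ℝ).symm.continuous.comp <|
    continuous_pi fun i => by
      simpa using (EuclideanSpace.proj (𝕜 := ℝ) (Fin.castLE h i)).continuous

lemma continuous_tailP (d m : ℕ) :
    Continuous fun ξ : EuclideanSpace ℝ (Fin (d - 1)) => tailP d m ξ :=
  (EuclideanSpace.equiv (Fin (d - m - 1)) ℝ).symm.continuous.comp <|
    continuous_pi fun i => by
      simpa using (EuclideanSpace.proj (𝕜 := ℝ)
        ((⟨m + i, by have := i.isLt; omega⟩ : Fin (d - 1)))).continuous

lemma isOpen_OmegaP (d m : ℕ) (h : m ≤ d - 1) (κ R : ℝ) : IsOpen (OmegaP d m h κ R) := by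
  have e : OmegaP d m h κ R = ball 0 1 ∩
      ({ξ | ‖headV m h ξ‖ < (1 / 1000) * R ^ (-(1 : ℝ) / 2)} ∩
        ⋃ n : Fin (d - m - 1) → ℤ,
          {ξ | ‖tailP d m ξ - (2 * π * R ^ (-κ)) • intVec n‖ < (1 / 1000) * R ^ (-(1 : ℝ))}) := by
    ext ξ
    simp only [OmegaP, Set.mem_setOf_eq, Set.mem_inter_iff, Set.mem_iUnion]
  rw [e]
  exact isOpen_ball.inter
    ((isOpen_lt (continuous_headV m h).norm continuous_const).inter
      (isOpen_iUnion fun n => isOpen_lt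
        (((continuous_tailP d m).sub continuous_const).norm) continuous_const))


set_option maxHeartbeats 2000000 in
lemma key_cos (d m : ℕ) (κ R : ℝ) (hR : 1 < R)
    (hmd : m ≤ d) (hmd1 : m ≤ d - 1) (hd0 : 0 < d) (hd1 : d - 1 < d)
    (x : EuclideanSpace ℝ (Fin d)) (hx : x ∈ LambdaP d m hmd hd0 κ R)
    (ξ : EuclideanSpace ℝ (Fin (d - 1))) (hξ : ξ ∈ OmegaP d m hmd1 κ R) :
    Real.cos (1 / 100) ≤ Real.cos (R * ((inner ℝ (headV m hmd x) (headV m hmd1 ξ) : ℝ) +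
      (inner ℝ (midV d m x) (tailP d m ξ) : ℝ) + x ⟨d - 1, hd1⟩ * ‖ξ‖ ^ 2)) := by
  obtain ⟨hxball, hxa, ⟨ℓ, hℓ⟩, k, hk⟩ := hx
  obtain ⟨hξball, hξb, n, hn⟩ := hξ
  have hR0 : (0 : ℝ) < R := by linarith
  -- scalar abbreviations
  set rh := R ^ (-(1 : ℝ) / 2) with hrh
  set ri := R ^ (-(1 : ℝ)) with hri
  set s := R ^ (κ - 1) with hs
  set t0 := R ^ (-κ) with ht0
  set r3 := R ^ (2 * κ - 1) with hr3
  -- scalar facts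
  have hrh0 : 0 < rh := Real.rpow_pos_of_pos hR0 _
  have hri0 : 0 < ri := Real.rpow_pos_of_pos hR0 _
  have hri1 : ri ≤ 1 := Real.rpow_le_one_of_one_le_of_nonpos hR.le (by norm_num)
  have hRri : R * ri = 1 := by
    rw [hri, Real.rpow_neg_one]; field_simp
  have Fh : R * (rh * rh) = 1 := by
    rw [hrh, ← Real.rpow_add hR0, show -(1:ℝ)/2 + -(1:ℝ)/2 = -1 by norm_num,
      Real.rpow_neg_one]; field_simp
  have Fst : R * (s * t0) = 1 := by
    rw [hs, ht0, ← Real.rpow_add hR0, show κ - 1 + -κ = -1 by ring,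
      Real.rpow_neg_one]; field_simp
  have Ft3 : R * (r3 * (t0 * t0)) = 1 := by
    rw [hr3, ht0, ← Real.rpow_add hR0, ← Real.rpow_add hR0,
      show 2 * κ - 1 + (-κ + -κ) = -1 by ring, Real.rpow_neg_one]; field_simp
  -- vector abbreviations
  set a := headV m hmd x with ha
  set b := headV m hmd1 ξ with hb
  set X := midV d m x with hX
  set Ξ := tailP d m ξ with hΞ
  set L := intVec ℓ with hL
  set N := intVec n with hN
  set u := X - s • L with hu
  set v := Ξ - (2 * π * t0) • N with hv
  set w := x ⟨d - 1, hd1⟩ - 1 / (2 * π) * r3 * (k : ℝ) with hw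
  have hwk : |w| < 1 / 1000 * ri := by rw [hw]; exact hk
  have hxnorm : ‖x‖ < 1 := mem_ball_zero_iff.mp hxball
  have hξnorm : ‖ξ‖ < 1 := mem_ball_zero_iff.mp hξball
  -- integer sums
  set P : ℤ := ∑ i, ℓ i * n i with hP
  set Q : ℤ := ∑ i, n i * n i with hQ

  -- decompositions
  have hXe : X = s • L + u := by rw [hu]; abel
  have hΞe : Ξ = (2 * π * t0) • N + v := by rw [hv]; abel
  have e1 : (inner ℝ X Ξ : ℝ) = (inner ℝ (s • L) ((2 * π * t0) • N) : ℝ) + (inner ℝ (s • L) v : ℝ)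
      + (inner ℝ u ((2 * π * t0) • N) : ℝ) + (inner ℝ u v : ℝ) := by
    rw [hXe, hΞe, inner_add_left, inner_add_right, inner_add_right]
    ring
  have e2 : (inner ℝ (s • L) ((2 * π * t0) • N) : ℝ) = s * (2 * π * t0) * (P : ℝ) := by
    rw [real_inner_smul_left, real_inner_smul_right, hL, hN, inner_intVec, ← hP]; ring
  have e3 : ‖ξ‖ ^ 2 = ‖b‖ ^ 2 + ‖Ξ‖ ^ 2 := by rw [hb, hΞ]; exact norm_sq_split d m hmd1 ξ
  have hNQ : ‖N‖ ^ 2 = (Q : ℝ) := by rw [hN, norm_sq_intVec, ← hQ]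
  have e4 : ‖Ξ‖ ^ 2 = (2 * π * t0) ^ 2 * (Q : ℝ)
      + 2 * (inner ℝ ((2 * π * t0) • N) v : ℝ) + ‖v‖ ^ 2 := by
    rw [hΞe, norm_add_sq_real, norm_smul, mul_pow, Real.norm_eq_abs, sq_abs, hNQ]
  have e5 : x ⟨d - 1, hd1⟩ = 1 / (2 * π) * r3 * (k : ℝ) + w := by rw [hw]; ring
  have hπ : (π : ℝ) ≠ 0 := Real.pi_ne_zero
  have Fst2 : R * (s * (2 * π * t0)) = 2 * π := by linear_combination (2 * π) * Fst
  have Ft32 : R * (1 / (2 * π) * r3 * (2 * π * t0) ^ 2) = 2 * π := by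
    calc R * (1 / (2 * π) * r3 * (2 * π * t0) ^ 2)
        = (1 / (2 * π) * (2 * π)) * (2 * π) * (R * (r3 * (t0 * t0))) := by ring
      _ = 2 * π := by rw [Ft3, one_div_mul_cancel (by positivity : (2 * π : ℝ) ≠ 0)]; ring
  have hphase : R * ((inner ℝ a b : ℝ) + (inner ℝ X Ξ : ℝ) + x ⟨d - 1, hd1⟩ * ‖ξ‖ ^ 2)
      = 2 * π * ((P : ℝ) + (k : ℝ) * (Q : ℝ))
        + (R * (inner ℝ a b : ℝ) + R * (inner ℝ (s • L) v : ℝ)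
          + R * (inner ℝ u ((2 * π * t0) • N) : ℝ) + R * (inner ℝ u v : ℝ)
          + R * (1 / (2 * π) * r3 * (k : ℝ))
              * (‖b‖ ^ 2 + 2 * (inner ℝ ((2 * π * t0) • N) v : ℝ) + ‖v‖ ^ 2)
          + R * w * ‖ξ‖ ^ 2) := by
    rw [e1, e2, e3, e4, e5]
    linear_combination ((P : ℝ)) * Fst2 + ((k : ℝ) * (Q : ℝ)) * Ft32
  -- basic bounds
  have hub : ‖u‖ ≤ 1 / 1000 * ri := hℓ.le
  have hvb : ‖v‖ ≤ 1 / 1000 * ri := hn.le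
  have hwb : |w| ≤ 1 / 1000 * ri := hwk.le
  have hab : ‖a‖ ≤ 1 / 1000 * rh := hxa.le
  have hbb : ‖b‖ ≤ 1 / 1000 * rh := hξb.le
  have hsL : ‖s • L‖ ≤ 1 + 1 / 1000 := by
    have h1 : ‖s • L‖ ≤ ‖X‖ + ‖u‖ := by
      calc ‖s • L‖ = ‖X - u‖ := by rw [hu, sub_sub_cancel]
      _ ≤ ‖X‖ + ‖u‖ := norm_sub_le _ _
    have h2 : ‖X‖ ≤ ‖x‖ := by rw [hX]; exact norm_midV_le d m x
    have h3 : 1 / 1000 * ri ≤ 1 / 1000 := by linarith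
    linarith [h1, h2, hxnorm, hub, h3]
  have htN : ‖(2 * π * t0) • N‖ ≤ 1 + 1 / 1000 := by
    have h1 : ‖(2 * π * t0) • N‖ ≤ ‖Ξ‖ + ‖v‖ := by
      calc ‖(2 * π * t0) • N‖ = ‖Ξ - v‖ := by rw [hv, sub_sub_cancel]
      _ ≤ ‖Ξ‖ + ‖v‖ := norm_sub_le _ _
    have h2 : ‖Ξ‖ ≤ ‖ξ‖ := by rw [hΞ]; exact norm_tailP_le d m ξ
    have h3 : 1 / 1000 * ri ≤ 1 / 1000 := by linarith
    linarith [h1, h2, hξnorm, hvb, h3]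
  have hτk : |1 / (2 * π) * r3 * (k : ℝ)| ≤ 1 + 1 / 1000 := by
    have h1 : |1 / (2 * π) * r3 * (k : ℝ)| ≤ |x ⟨d - 1, hd1⟩| + |w| := by
      calc |1 / (2 * π) * r3 * (k : ℝ)| = |x ⟨d - 1, hd1⟩ - w| := by rw [hw]; congr 1; ring
      _ ≤ |x ⟨d - 1, hd1⟩| + |w| := abs_sub _ _
    have h2 : |x ⟨d - 1, hd1⟩| ≤ ‖x‖ := abs_coord_le x _
    have h3 : 1 / 1000 * ri ≤ 1 / 1000 := by linarith
    linarith [h1, h2, hxnorm, hwb, h3]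
  -- term bounds
  have hT1 : |R * (inner ℝ a b : ℝ)| ≤ 1 / 1000000 := by
    rw [abs_mul, abs_of_pos hR0]
    have h1 : |(inner ℝ a b : ℝ)| ≤ (1 / 1000 * rh) * (1 / 1000 * rh) :=
      (abs_real_inner_le_norm a b).trans
        (mul_le_mul hab hbb (norm_nonneg _) (by positivity))
    calc R * |(inner ℝ a b : ℝ)| ≤ R * ((1 / 1000 * rh) * (1 / 1000 * rh)) :=
          mul_le_mul_of_nonneg_left h1 hR0.le
    _ = 1 / 1000000 * (R * (rh * rh)) := by ring
    _ = 1 / 1000000 := by rw [Fh]; ring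
  have hT2 : |R * (inner ℝ (s • L) v : ℝ)| ≤ 1001 / 1000000 := by
    rw [abs_mul, abs_of_pos hR0]
    have h1 : |(inner ℝ (s • L) v : ℝ)| ≤ (1 + 1 / 1000) * (1 / 1000 * ri) :=
      (abs_real_inner_le_norm _ _).trans
        (mul_le_mul hsL hvb (norm_nonneg _) (by norm_num))
    calc R * |(inner ℝ (s • L) v : ℝ)| ≤ R * ((1 + 1 / 1000) * (1 / 1000 * ri)) :=
          mul_le_mul_of_nonneg_left h1 hR0.le
    _ = 1001 / 1000000 * (R * ri) := by ring
    _ = 1001 / 1000000 := by rw [hRri]; ring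
  have hT3 : |R * (inner ℝ u ((2 * π * t0) • N) : ℝ)| ≤ 1001 / 1000000 := by
    rw [abs_mul, abs_of_pos hR0]
    have h1 : |(inner ℝ u ((2 * π * t0) • N) : ℝ)| ≤ (1 / 1000 * ri) * (1 + 1 / 1000) :=
      (abs_real_inner_le_norm _ _).trans
        (mul_le_mul hub htN (norm_nonneg _) (by positivity))
    calc R * |(inner ℝ u ((2 * π * t0) • N) : ℝ)| ≤ R * ((1 / 1000 * ri) * (1 + 1 / 1000)) :=
          mul_le_mul_of_nonneg_left h1 hR0.le
    _ = 1001 / 1000000 * (R * ri) := by ring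
    _ = 1001 / 1000000 := by rw [hRri]; ring
  have hT4 : |R * (inner ℝ u v : ℝ)| ≤ 1 / 1000000 := by
    rw [abs_mul, abs_of_pos hR0]
    have h1 : |(inner ℝ u v : ℝ)| ≤ (1 / 1000 * ri) * (1 / 1000 * ri) :=
      (abs_real_inner_le_norm _ _).trans
        (mul_le_mul hub hvb (norm_nonneg _) (by positivity))
    calc R * |(inner ℝ u v : ℝ)| ≤ R * ((1 / 1000 * ri) * (1 / 1000 * ri)) :=
          mul_le_mul_of_nonneg_left h1 hR0.le
    _ = 1 / 1000000 * ri * (R * ri) := by ring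
    _ = 1 / 1000000 * ri := by rw [hRri]; ring
    _ ≤ 1 / 1000000 := by linarith [hri1]
  have hT5 : |R * (1 / (2 * π) * r3 * (k : ℝ))
      * (‖b‖ ^ 2 + 2 * (inner ℝ ((2 * π * t0) • N) v : ℝ) + ‖v‖ ^ 2)| ≤ 21 / 10000 := by
    rw [abs_mul, abs_mul, abs_of_pos hR0]
    have hI5 : |(inner ℝ ((2 * π * t0) • N) v : ℝ)| ≤ (1 + 1 / 1000) * (1 / 1000 * ri) :=
      (abs_real_inner_le_norm _ _).trans
        (mul_le_mul htN hvb (norm_nonneg _) (by norm_num))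
    have hB2 : ‖b‖ ^ 2 ≤ (1 / 1000 * rh) * (1 / 1000 * rh) := by
      have := pow_le_pow_left₀ (norm_nonneg b) hbb 2
      calc ‖b‖ ^ 2 ≤ (1 / 1000 * rh) ^ 2 := this
      _ = (1 / 1000 * rh) * (1 / 1000 * rh) := sq (1 / 1000 * rh) ▸ by ring
    have hV2 : ‖v‖ ^ 2 ≤ (1 / 1000 * ri) * (1 / 1000 * ri) := by
      have := pow_le_pow_left₀ (norm_nonneg v) hvb 2
      calc ‖v‖ ^ 2 ≤ (1 / 1000 * ri) ^ 2 := this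
      _ = (1 / 1000 * ri) * (1 / 1000 * ri) := by ring
    have hS : |‖b‖ ^ 2 + 2 * (inner ℝ ((2 * π * t0) • N) v : ℝ) + ‖v‖ ^ 2|
        ≤ (1 / 1000 * rh) * (1 / 1000 * rh) + 2 * ((1 + 1 / 1000) * (1 / 1000 * ri))
          + (1 / 1000 * ri) * (1 / 1000 * ri) := by
      have a1 := abs_add_le (‖b‖ ^ 2 + 2 * (inner ℝ ((2 * π * t0) • N) v : ℝ)) (‖v‖ ^ 2)
      have a2 := abs_add_le (‖b‖ ^ 2) (2 * (inner ℝ ((2 * π * t0) • N) v : ℝ))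
      have a3 : |‖b‖ ^ 2| = ‖b‖ ^ 2 := abs_of_nonneg (by positivity)
      have a4 : |‖v‖ ^ 2| = ‖v‖ ^ 2 := abs_of_nonneg (by positivity)
      have a5 : |2 * (inner ℝ ((2 * π * t0) • N) v : ℝ)|
          = 2 * |(inner ℝ ((2 * π * t0) • N) v : ℝ)| := by rw [abs_mul, abs_two]
      linarith
    calc R * |1 / (2 * π) * r3 * (k : ℝ)|
        * |‖b‖ ^ 2 + 2 * (inner ℝ ((2 * π * t0) • N) v : ℝ) + ‖v‖ ^ 2|
        ≤ R * ((1 + 1 / 1000) * ((1 / 1000 * rh) * (1 / 1000 * rh)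
          + 2 * ((1 + 1 / 1000) * (1 / 1000 * ri)) + (1 / 1000 * ri) * (1 / 1000 * ri))) := by
          rw [mul_assoc]
          exact mul_le_mul_of_nonneg_left
            (mul_le_mul hτk hS (abs_nonneg _) (by norm_num)) hR0.le
    _ = (1 + 1 / 1000) * ((1 / 1000) ^ 2 * (R * (rh * rh))
          + 2 * (1 + 1 / 1000) * (1 / 1000) * (R * ri)
          + (1 / 1000) ^ 2 * ri * (R * ri)) := by ring
    _ = (1 + 1 / 1000) * ((1 / 1000) ^ 2
          + 2 * (1 + 1 / 1000) * (1 / 1000) + (1 / 1000) ^ 2 * ri) := by rw [Fh, hRri]; ring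
    _ ≤ 21 / 10000 := by linarith [hri1, hri0]
  have hT6 : |R * w * ‖ξ‖ ^ 2| ≤ 1 / 1000 := by
    rw [abs_mul, abs_mul, abs_of_pos hR0]
    have h1 : |‖ξ‖ ^ 2| ≤ 1 := by
      rw [abs_of_nonneg (by positivity)]
      have := pow_le_pow_left₀ (norm_nonneg ξ) hξnorm.le 2
      simpa using this
    calc R * |w| * |‖ξ‖ ^ 2| ≤ R * (1 / 1000 * ri) * 1 :=
          mul_le_mul (mul_le_mul_of_nonneg_left hwb hR0.le) h1 (abs_nonneg _) (by positivity)
    _ = 1 / 1000 * (R * ri) := by ring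
    _ = 1 / 1000 := by rw [hRri]; ring
  -- total error bound
  set E : ℝ := R * (inner ℝ a b : ℝ) + R * (inner ℝ (s • L) v : ℝ)
      + R * (inner ℝ u ((2 * π * t0) • N) : ℝ) + R * (inner ℝ u v : ℝ)
      + R * (1 / (2 * π) * r3 * (k : ℝ))
          * (‖b‖ ^ 2 + 2 * (inner ℝ ((2 * π * t0) • N) v : ℝ) + ‖v‖ ^ 2)
      + R * w * ‖ξ‖ ^ 2 with hE_def
  have hEb : |E| ≤ 1 / 100 := by
    rw [hE_def]
    set t1 := R * (inner ℝ a b : ℝ)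
    set t2 := R * (inner ℝ (s • L) v : ℝ)
    set t3 := R * (inner ℝ u ((2 * π * t0) • N) : ℝ)
    set t4 := R * (inner ℝ u v : ℝ)
    set t5 := R * (1 / (2 * π) * r3 * (k : ℝ))
        * (‖b‖ ^ 2 + 2 * (inner ℝ ((2 * π * t0) • N) v : ℝ) + ‖v‖ ^ 2)
    set t6 := R * w * ‖ξ‖ ^ 2
    have b1 := abs_add_le (t1 + t2 + t3 + t4 + t5) t6
    have b2 := abs_add_le (t1 + t2 + t3 + t4) t5
    have b3 := abs_add_le (t1 + t2 + t3) t4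
    have b4 := abs_add_le (t1 + t2) t3
    have b5 := abs_add_le t1 t2
    linarith
  -- conclude
  rw [hphase]
  set M : ℤ := P + k * Q with hM
  have hEgoal : 2 * π * ((P : ℝ) + (k : ℝ) * (Q : ℝ)) + E = E + (M : ℝ) * (2 * π) := by
    rw [hM]; push_cast; ring
  rw [hEgoal, Real.cos_add_int_mul_two_pi]
  calc Real.cos (1 / 100) ≤ Real.cos |E| :=
        Real.cos_le_cos_of_nonneg_of_le_pi (abs_nonneg _)
          (by linarith [Real.pi_gt_three]) hEb
  _ = Real.cos E := Real.cos_abs E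

theorem stmt16 (d m : ℕ) (hd : 3 ≤ d) (hm1 : 1 ≤ m) (hm2 : 2 * m ≤ d)
    (κ : ℝ) (hκ1 : 0 < κ) (hκ2 : κ < 1 / 2) (R : ℝ) (hR : 1 < R)
    (x : EuclideanSpace ℝ (Fin d))
    (hx : x ∈ LambdaP d m (by omega) (by omega) κ R) :
    Real.cos (1 / 100) * (volume (OmegaP d m (by omega) κ R)).toReal ≤
      ‖∫ ξ in OmegaP d m (by omega) κ R,
          Complex.exp (Complex.I *
            ((R * ((inner ℝ (headV m (by omega : m ≤ d) x)
                (headV m (by omega : m ≤ d - 1) ξ) : ℝ) +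
              (inner ℝ (midV d m x) (tailP d m ξ) : ℝ) +
              x ⟨d - 1, by omega⟩ * ‖ξ‖ ^ 2) : ℝ) : ℂ))‖ := by

  have hmd : m ≤ d := by omega
  have hmd1 : m ≤ d - 1 := by omega
  have hd0 : 0 < d := by omega
  have hd1 : d - 1 < d := by omega
  have hR0 : (0 : ℝ) < R := by linarith
  show Real.cos (1 / 100) * (volume (OmegaP d m hmd1 κ R)).toReal ≤
      ‖∫ ξ in OmegaP d m hmd1 κ R,
          Complex.exp (Complex.I *
            ((R * ((inner ℝ (headV m hmd x) (headV m hmd1 ξ) : ℝ) +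
              (inner ℝ (midV d m x) (tailP d m ξ) : ℝ) +
              x ⟨d - 1, hd1⟩ * ‖ξ‖ ^ 2) : ℝ) : ℂ))‖
  set Ω := OmegaP d m hmd1 κ R with hΩ
  set f : EuclideanSpace ℝ (Fin (d - 1)) → ℝ := fun ξ =>
    R * ((inner ℝ (headV m hmd x) (headV m hmd1 ξ) : ℝ) +
      (inner ℝ (midV d m x) (tailP d m ξ) : ℝ) + x ⟨d - 1, hd1⟩ * ‖ξ‖ ^ 2) with hf
  have hΩo : IsOpen Ω := isOpen_OmegaP d m hmd1 κ R
  have hΩm : MeasurableSet Ω := hΩo.measurableSet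
  have hΩsub : Ω ⊆ ball 0 1 := fun ξ hξ => hξ.1
  have hΩfin : volume Ω < ⊤ := lt_of_le_of_lt (measure_mono hΩsub) measure_ball_lt_top
  have hfc : Continuous f := by
    rw [hf]
    apply continuous_const.mul
    apply Continuous.add
    apply Continuous.add
    · exact Continuous.inner continuous_const (continuous_headV m hmd1)
    · exact Continuous.inner continuous_const (continuous_tailP d m)
    · exact continuous_const.mul (continuous_norm.pow 2)
  have hgc : Continuous fun ξ => Complex.exp (Complex.I * ((f ξ : ℝ) : ℂ)) :=
    Complex.continuous_exp.comp (continuous_const.mul (Complex.continuous_ofReal.comp hfc))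
  have hconst : IntegrableOn (fun _ : EuclideanSpace ℝ (Fin (d - 1)) => (1 : ℝ)) Ω volume :=
    integrableOn_const hΩfin.ne
  have hgint : IntegrableOn (fun ξ => Complex.exp (Complex.I * ((f ξ : ℝ) : ℂ))) Ω volume := by
    refine Integrable.mono' hconst hgc.aestronglyMeasurable.restrict (ae_of_all _ fun ξ => ?_)
    rw [show Complex.I * ((f ξ : ℝ) : ℂ) = ((f ξ : ℝ) : ℂ) * Complex.I from mul_comm _ _,
      Complex.norm_exp_ofReal_mul_I]
  have hcint : IntegrableOn (fun ξ => Real.cos (f ξ)) Ω volume := by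
    refine Integrable.mono' hconst
      ((Real.continuous_cos.comp hfc).aestronglyMeasurable.restrict)
      (ae_of_all _ fun ξ => ?_)
    rw [Real.norm_eq_abs]
    exact Real.abs_cos_le_one _
  have hconstc : IntegrableOn (fun _ : EuclideanSpace ℝ (Fin (d - 1)) =>
      Real.cos (1 / 100)) Ω volume := integrableOn_const hΩfin.ne
  calc Real.cos (1 / 100) * (volume Ω).toReal
      = ∫ _ in Ω, Real.cos (1 / 100) := by rw [setIntegral_const, smul_eq_mul, mul_comm, measureReal_def]
    _ ≤ ∫ ξ in Ω, Real.cos (f ξ) := by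
        refine setIntegral_mono_on hconstc hcint hΩm fun ξ hξ => ?_
        exact key_cos d m κ R hR hmd hmd1 hd0 hd1 x hx ξ hξ
    _ = ∫ ξ in Ω, (Complex.exp (Complex.I * ((f ξ : ℝ) : ℂ))).re := by
        refine integral_congr_ae (Filter.Eventually.of_forall fun ξ => ?_)
        show Real.cos (f ξ) = (Complex.exp (Complex.I * ((f ξ : ℝ) : ℂ))).re
        rw [show Complex.I * ((f ξ : ℝ) : ℂ) = ((f ξ : ℝ) : ℂ) * Complex.I from mul_comm _ _,
          Complex.exp_ofReal_mul_I_re]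
    _ = (∫ ξ in Ω, Complex.exp (Complex.I * ((f ξ : ℝ) : ℂ))).re := by
        have h := integral_re (μ := volume.restrict Ω) hgint
        simpa using h
    _ ≤ ‖∫ ξ in Ω, Complex.exp (Complex.I * ((f ξ : ℝ) : ℂ))‖ := by
        exact Complex.re_le_norm _
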